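/- Let R = D[X;σ,δ] whose center is C = K[z] with K a field, R free of finite rank over C. Let f ∈ R with bound f* = ν·ĝ where ĝ ∈ K[z] is irreducible, set A = R/Rf*, a = f + Rf*, and let e ∈ A be an idempotent with Ae = Aa. Then f is irreducible in R if and only if the algebra (1−e)A(1−e) is a division ring. -/

import Mathlib

/-!
The map `x ↦ φ x * (1 - e)` identifies `R/Rf` with the left `A`-module `A(1 - e)`, whose
endomorphism ring is the corner `(1 - e)A(1 - e)`. Left division with remainder makes every left
ideal of `R` principal, so `f` is irreducible exactly when `Rf` is a maximal left ideal, i.e. when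
`A(1 - e)` is simple; Schur's lemma then makes the corner a division ring. Conversely, right
division makes every two-sided ideal of `R` a principal right ideal `pR`. Since `ĝ` is central and
`A(1 - e)` is faithful (the bound is the annihilator of `R/Rf`), this forces the two-sided ideal
generated by `1 - e` to be all of `A`; then each nonzero `n ∈ A(1 - e)` has some nonzero
`(1 - e) y n` in the corner, whose inverse shows `A n = A(1 - e)`.
-/

/-- An Ore extension `R = D[X;σ,δ]`: `R` is a ring containing `D` via `C`, with a
distinguished element `X`, which is a free left `D`-module on the powers of `X`
(encoded by the coefficient equivalence `e`), subject to `X·a = σ(a)·X + δ(a)`,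
where `δ` is a `σ`-derivation. -/
structure OreExt (D : Type*) [DivisionRing D] (σ : D ≃+* D) (δ : D → D)
    (R : Type*) [Ring R] where
  C : D →+* R
  X : R
  e : R ≃+ (ℕ →₀ D)
  e_symm_single : ∀ (n : ℕ) (d : D), e.symm (Finsupp.single n d) = C d * X ^ n
  X_mul_C : ∀ a : D, X * C a = C (σ a) * X + C (δ a)
  δ_add : ∀ a b : D, δ (a + b) = δ a + δ b
  δ_mul : ∀ a b : D, δ (a * b) = σ a * δ b + δ a * b

namespace OreExt

variable {D R : Type*} [DivisionRing D] [Ring R] {σ : D ≃+* D} {δ : D → D}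

/-- Degree, with `deg 0 = ⊥` (i.e. `-∞`). -/
noncomputable def deg (O : OreExt D σ δ R) (f : R) : WithBot ℕ := (O.e f).support.max

/-- Degree as a natural number (`0` for the zero polynomial). -/
noncomputable def ndeg (O : OreExt D σ δ R) (f : R) : ℕ := WithBot.unbotD 0 ((O.e f).support.max)

/-- Leading coefficient. -/
noncomputable def lc (O : OreExt D σ δ R) (f : R) : D := O.e f (O.ndeg f)

/-- `f` is irreducible: it has positive degree and in any factorization one of the two
factors is a constant (an element of `D`). -/
def IrreducibleOre (O : OreExt D σ δ R) (f : R) : Prop :=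
  0 < O.ndeg f ∧ ∀ g h : R, f = g * h → (∃ d : D, g = O.C d) ∨ (∃ d : D, h = O.C d)

end OreExt

/-- A left ideal is twosided. -/
def IsTwoSidedIdeal' {R : Type*} [Ring R] (I : Ideal R) : Prop :=
  ∀ x ∈ I, ∀ r : R, x * r ∈ I

/-- `b` is a bound of `f`: the left ideal `Rb` is twosided and is the largest twosided
ideal contained in `Rf`. -/
def IsBound {R : Type*} [Ring R] (f b : R) : Prop :=
  Ideal.span {b} ≤ Ideal.span {f} ∧ IsTwoSidedIdeal' (Ideal.span {b}) ∧
    ∀ J : Ideal R, IsTwoSidedIdeal' J → J ≤ Ideal.span {f} → J ≤ Ideal.span {b}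

theorem isPrincipalIdealRing_of_exists_sub_mul_lt {R : Type*} [Ring R] (d : R → ℕ)
    (h : ∀ p x : R, p ≠ 0 → d p ≤ d x → ∃ c, x - c * p = 0 ∨ d (x - c * p) < d x) :
    IsPrincipalIdealRing R := by
  refine ⟨fun I => ?_⟩
  by_cases hI : I = ⊥
  · rw [hI]; exact bot_isPrincipal
  obtain ⟨p, ⟨hpI, hp0⟩, hmin⟩ := exists_minimalFor_of_wellFoundedLT (fun p => p ∈ I ∧ p ≠ 0) d
    (Submodule.exists_mem_ne_zero_of_ne_bot hI)
  refine ⟨p, le_antisymm (fun x hx => ?_) ((Ideal.span_singleton_le_iff_mem I).2 hpI)⟩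
  induction hn : d x using Nat.strong_induction_on generalizing x with
  | _ n ih =>
  by_cases hx0 : x = 0
  · rw [hx0]; exact Submodule.zero_mem _
  have hpx : d p ≤ d x := le_of_not_gt fun hlt => (hmin ⟨hx, hx0⟩ hlt.le).not_gt hlt
  obtain ⟨c, hc | hc⟩ := h p x hp0 hpx
  · exact Ideal.mem_span_singleton'.2 ⟨c, (sub_eq_zero.1 hc).symm⟩
  · have hrem := ih _ (hn ▸ hc) (x - c * p) (I.sub_mem hx (I.mul_mem_left c hpI)) rfl
    simpa using Ideal.add_mem _ hrem (Ideal.mul_mem_left _ c (Ideal.mem_span_singleton_self p))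

namespace OreExt

variable {D R : Type*} [DivisionRing D] [Ring R] {σ : D ≃+* D} {δ : D → D}
  (O : OreExt D σ δ R)

include O in
theorem δ_zero : δ 0 = 0 := by
  simpa using O.δ_add 0 0

theorem e_C_mul_X_pow (d : D) (n : ℕ) : O.e (O.C d * O.X ^ n) = Finsupp.single n d := by
  rw [← O.e_symm_single, AddEquiv.apply_symm_apply]

theorem e_C (d : D) : O.e (O.C d) = Finsupp.single 0 d := by
  simpa using O.e_C_mul_X_pow d 0

include O in
theorem nontrivial : Nontrivial R := O.e.toEquiv.nontrivial

theorem ndeg_le_iff {x : R} {N : ℕ} : O.ndeg x ≤ N ↔ ∀ m, N < m → O.e x m = 0 := by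
  rw [ndeg, WithBot.unbotD_le_iff fun _ => N.zero_le, Finset.max_le_iff]
  simp only [Finsupp.mem_support_iff, WithBot.coe_le_coe]
  exact forall_congr' fun m => by rw [not_imp_comm, not_le]

theorem coeff_ndeg_ne_zero {x : R} (hx : x ≠ 0) : O.e x (O.ndeg x) ≠ 0 := by
  have hne : (O.e x).support.Nonempty := by simpa using hx
  have hmax : O.ndeg x = (O.e x).support.max' hne := by
    rw [ndeg, ← Finset.coe_max' hne, WithBot.unbotD_coe]
  rw [hmax]
  exact Finsupp.mem_support_iff.1 (Finset.max'_mem _ hne)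

theorem ndeg_eq_of_le {x : R} {N : ℕ} (hx : O.ndeg x ≤ N) (hN : O.e x N ≠ 0) : O.ndeg x = N :=
  hx.antisymm (not_lt.1 fun hlt => hN (O.ndeg_le_iff.1 le_rfl N hlt))

theorem ndeg_add_le {x y : R} {N : ℕ} (hx : O.ndeg x ≤ N) (hy : O.ndeg y ≤ N) :
    O.ndeg (x + y) ≤ N :=
  O.ndeg_le_iff.2 fun m hm => by
    rw [O.e.map_add, Finsupp.add_apply, O.ndeg_le_iff.1 hx m hm, O.ndeg_le_iff.1 hy m hm, add_zero]

theorem ndeg_sub_le {x y : R} {N : ℕ} (hx : O.ndeg x ≤ N) (hy : O.ndeg y ≤ N) :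
    O.ndeg (x - y) ≤ N :=
  O.ndeg_le_iff.2 fun m hm => by
    rw [O.e.map_sub, Finsupp.sub_apply, O.ndeg_le_iff.1 hx m hm, O.ndeg_le_iff.1 hy m hm, sub_zero]

theorem eq_sum_C_mul_X_pow {x : R} {N : ℕ} (hx : O.ndeg x ≤ N) :
    x = ∑ n ∈ Finset.range (N + 1), O.C (O.e x n) * O.X ^ n := by
  apply O.e.injective
  ext m
  simp only [map_sum, O.e_C_mul_X_pow, Finsupp.finsetSum_apply, Finsupp.single_apply,
    Finset.sum_ite_eq', Finset.mem_range]
  split_ifs with hm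
  · rfl
  · exact O.ndeg_le_iff.1 hx m (by omega)

theorem induction_on_ndeg_le {P : R → Prop} {x : R} {N : ℕ} (hx : O.ndeg x ≤ N) (zero : P 0)
    (add : ∀ x y, P x → P y → P (x + y)) (monomial : ∀ n ≤ N, ∀ d, P (O.C d * O.X ^ n)) :
    P x := by
  rw [O.eq_sum_C_mul_X_pow hx]
  exact Finset.sum_induction _ P add zero fun n hn =>
    monomial n (Nat.lt_succ_iff.1 (Finset.mem_range.1 hn)) _

theorem e_C_mul (d : D) (y : R) : O.e (O.C d * y) = d • O.e y := by
  refine O.induction_on_ndeg_le (P := fun y => O.e (O.C d * y) = d • O.e y) le_rfl (by simp)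
    (fun x y hx hy => ?_) fun n _ d' => ?_
  · rw [mul_add, map_add, map_add, hx, hy, smul_add]
  · rw [← mul_assoc, ← map_mul, O.e_C_mul_X_pow, O.e_C_mul_X_pow, Finsupp.smul_single,
      smul_eq_mul]

theorem ndeg_C_mul_le (d : D) (y : R) : O.ndeg (O.C d * y) ≤ O.ndeg y :=
  O.ndeg_le_iff.2 fun m hm => by
    rw [O.e_C_mul, Finsupp.smul_apply, O.ndeg_le_iff.1 le_rfl m hm, smul_zero]

theorem coeff_X_mul_succ (y : R) (n : ℕ) :
    O.e (O.X * y) (n + 1) = σ (O.e y n) + δ (O.e y (n + 1)) := by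
  refine O.induction_on_ndeg_le
    (P := fun y => O.e (O.X * y) (n + 1) = σ (O.e y n) + δ (O.e y (n + 1))) le_rfl
    (by simp [O.δ_zero]) (fun x y hx hy => ?_) fun m _ d => ?_
  · simp only [mul_add, map_add, Finsupp.add_apply, hx, hy, O.δ_add]
    abel
  · rw [← mul_assoc, O.X_mul_C, add_mul, mul_assoc, ← pow_succ', O.e.map_add, Finsupp.add_apply,
      O.e_C_mul_X_pow, O.e_C_mul_X_pow, O.e_C_mul_X_pow]
    simp only [Finsupp.single_apply]
    split_ifs <;> simp_all [O.δ_zero]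

theorem ndeg_X_pow_mul_le_and_coeff {y : R} {M : ℕ} (hy : O.ndeg y ≤ M) (k : ℕ) :
    O.ndeg (O.X ^ k * y) ≤ k + M ∧ O.e (O.X ^ k * y) (k + M) = σ^[k] (O.e y M) := by
  induction k with
  | zero => simpa using hy
  | succ k ih =>
    have hcoeff := O.ndeg_le_iff.1 ih.1
    rw [pow_succ', mul_assoc]
    refine ⟨O.ndeg_le_iff.2 fun m hm => ?_, ?_⟩
    · obtain ⟨m, rfl⟩ := Nat.exists_eq_add_one_of_ne_zero (n := m) (by omega)
      rw [O.coeff_X_mul_succ, hcoeff m (by omega), hcoeff (m + 1) (by omega), map_zero,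
        O.δ_zero, add_zero]
    · rw [show k + 1 + M = k + M + 1 by omega, O.coeff_X_mul_succ, ih.2,
        hcoeff _ (Nat.lt_succ_self _), O.δ_zero, add_zero, Function.iterate_succ_apply']

theorem ndeg_mul_le {x y : R} {N M : ℕ} (hx : O.ndeg x ≤ N) (hy : O.ndeg y ≤ M) :
    O.ndeg (x * y) ≤ N + M := by
  refine O.induction_on_ndeg_le (P := fun x => O.ndeg (x * y) ≤ N + M) hx
    (by simp [ndeg]) (fun x x' hx hx' => ?_) fun n hn d => ?_
  · rw [add_mul]; exact O.ndeg_add_le hx hx'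
  · rw [mul_assoc]
    exact (O.ndeg_C_mul_le d _).trans ((O.ndeg_X_pow_mul_le_and_coeff hy n).1.trans (by omega))

theorem coeff_mul_add {x y : R} {N M : ℕ} (hx : O.ndeg x ≤ N) (hy : O.ndeg y ≤ M) :
    O.e (x * y) (N + M) = O.e x N * σ^[N] (O.e y M) := by
  refine O.induction_on_ndeg_le
    (P := fun x => O.e (x * y) (N + M) = O.e x N * σ^[N] (O.e y M)) hx
    (by simp) (fun x x' hx hx' => ?_) fun n hn d => ?_
  · rw [add_mul, O.e.map_add, Finsupp.add_apply, hx, hx', O.e.map_add, Finsupp.add_apply,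
      add_mul]
  · rw [mul_assoc, O.e_C_mul, Finsupp.smul_apply, smul_eq_mul, O.e_C_mul_X_pow,
      Finsupp.single_apply]
    rcases hn.eq_or_lt with rfl | hlt
    · rw [(O.ndeg_X_pow_mul_le_and_coeff hy n).2, if_pos rfl]
    · rw [O.ndeg_le_iff.1 (O.ndeg_X_pow_mul_le_and_coeff hy n).1 _ (by omega), if_neg hlt.ne,
        mul_zero, zero_mul]

theorem iterate_σ_ne_zero {a : D} (ha : a ≠ 0) (k : ℕ) : σ^[k] a ≠ 0 := fun h =>
  ha (σ.injective.iterate k (h.trans (Function.iterate_fixed (map_zero σ) k).symm))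

theorem coeff_mul_ndeg_add_ndeg_ne_zero {x y : R} (hx : x ≠ 0) (hy : y ≠ 0) :
    O.e (x * y) (O.ndeg x + O.ndeg y) ≠ 0 := by
  rw [O.coeff_mul_add le_rfl le_rfl]
  exact mul_ne_zero (O.coeff_ndeg_ne_zero hx) (iterate_σ_ne_zero (O.coeff_ndeg_ne_zero hy) _)

include O in
theorem noZeroDivisors : NoZeroDivisors R where
  eq_zero_or_eq_zero_of_mul_eq_zero {x y} h := by
    by_contra! hxy
    simpa [h] using O.coeff_mul_ndeg_add_ndeg_ne_zero hxy.1 hxy.2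

theorem ndeg_mul {x y : R} (hx : x ≠ 0) (hy : y ≠ 0) : O.ndeg (x * y) = O.ndeg x + O.ndeg y :=
  O.ndeg_eq_of_le (O.ndeg_mul_le le_rfl le_rfl) (O.coeff_mul_ndeg_add_ndeg_ne_zero hx hy)

theorem ndeg_eq_zero_iff {x : R} : O.ndeg x = 0 ↔ ∃ d, x = O.C d := by
  constructor
  · intro hx
    refine ⟨O.e x 0, O.e.injective ?_⟩
    ext m
    rw [O.e_C, Finsupp.single_apply]
    split_ifs with hm
    · rw [hm]
    · exact O.ndeg_le_iff.1 hx.le m (Nat.pos_of_ne_zero (Ne.symm hm))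
  · rintro ⟨d, rfl⟩
    refine Nat.le_zero.1 (O.ndeg_le_iff.2 fun m hm => ?_)
    rw [O.e_C, Finsupp.single_apply, if_neg hm.ne]

theorem one_mem_span_singleton_iff {x : R} (hx : x ≠ 0) :
    (1 : R) ∈ Ideal.span {x} ↔ O.ndeg x = 0 := by
  have := O.nontrivial
  rw [Ideal.mem_span_singleton']
  constructor
  · rintro ⟨c, hc⟩
    have h := congrArg O.ndeg hc
    rw [O.ndeg_mul (left_ne_zero_of_mul_eq_one hc) hx, O.ndeg_eq_zero_iff.2 ⟨1, O.C.map_one.symm⟩]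
      at h
    omega
  · intro h
    obtain ⟨d, rfl⟩ := O.ndeg_eq_zero_iff.1 h
    refine ⟨O.C d⁻¹, by rw [← map_mul, inv_mul_cancel₀ fun hd => hx (by simp [hd]), map_one]⟩

theorem ndeg_C_mul_X_pow_le (d : D) (k : ℕ) : O.ndeg (O.C d * O.X ^ k) ≤ k :=
  O.ndeg_le_iff.2 fun m hm => by rw [O.e_C_mul_X_pow, Finsupp.single_apply, if_neg hm.ne]

theorem ndeg_sub_lt_of_coeff_eq {x y : R} (hy : O.ndeg y ≤ O.ndeg x)
    (h : O.e y (O.ndeg x) = O.e x (O.ndeg x)) : x - y = 0 ∨ O.ndeg (x - y) < O.ndeg x := by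
  refine or_iff_not_imp_left.2 fun hxy =>
    (O.ndeg_sub_le le_rfl hy).lt_of_ne fun heq => O.coeff_ndeg_ne_zero hxy ?_
  rw [heq, O.e.map_sub, Finsupp.sub_apply, h, sub_self]

theorem exists_ndeg_sub_mul_lt {p x : R} (hp : p ≠ 0) (hpx : O.ndeg p ≤ O.ndeg x) :
    ∃ c, x - c * p = 0 ∨ O.ndeg (x - c * p) < O.ndeg x := by
  set k := O.ndeg x - O.ndeg p
  have hk : k + O.ndeg p = O.ndeg x := Nat.sub_add_cancel hpx
  set c := O.C (O.e x (O.ndeg x) * (σ^[k] (O.e p (O.ndeg p)))⁻¹) * O.X ^ k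
  have hc : O.ndeg c ≤ k := O.ndeg_C_mul_X_pow_le _ k
  have htop := O.coeff_mul_add hc (le_refl (O.ndeg p))
  rw [hk] at htop
  refine ⟨c, O.ndeg_sub_lt_of_coeff_eq (hk ▸ O.ndeg_mul_le hc le_rfl) ?_⟩
  rw [htop, O.e_C_mul_X_pow, Finsupp.single_eq_same,
    inv_mul_cancel_right₀ (iterate_σ_ne_zero (O.coeff_ndeg_ne_zero hp) k)]

theorem exists_ndeg_sub_mul_lt' {p x : R} (hp : p ≠ 0) (hpx : O.ndeg p ≤ O.ndeg x) :
    ∃ c, x - p * c = 0 ∨ O.ndeg (x - p * c) < O.ndeg x := by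
  set k := O.ndeg x - O.ndeg p
  have hk : O.ndeg p + k = O.ndeg x := Nat.add_sub_cancel' hpx
  obtain ⟨a, ha⟩ := σ.surjective.iterate (O.ndeg p) ((O.e p (O.ndeg p))⁻¹ * O.e x (O.ndeg x))
  have hc : O.ndeg (O.C a * O.X ^ k) ≤ k := O.ndeg_C_mul_X_pow_le a k
  have htop := O.coeff_mul_add (le_refl (O.ndeg p)) hc
  rw [hk] at htop
  refine ⟨O.C a * O.X ^ k, O.ndeg_sub_lt_of_coeff_eq (hk ▸ O.ndeg_mul_le le_rfl hc) ?_⟩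
  rw [htop, O.e_C_mul_X_pow, Finsupp.single_eq_same, ha,
    mul_inv_cancel_left₀ (O.coeff_ndeg_ne_zero hp)]

include O in
theorem isPrincipalIdealRing : IsPrincipalIdealRing R :=
  isPrincipalIdealRing_of_exists_sub_mul_lt O.ndeg fun _ _ => O.exists_ndeg_sub_mul_lt

include O in
theorem isPrincipalIdealRing_mulOpposite : IsPrincipalIdealRing Rᵐᵒᵖ := by
  refine isPrincipalIdealRing_of_exists_sub_mul_lt (O.ndeg ∘ MulOpposite.unop)
    fun p x hp hpx => ?_
  obtain ⟨c, hc⟩ := O.exists_ndeg_sub_mul_lt' ((MulOpposite.unop_ne_zero_iff p).2 hp) hpx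
  refine ⟨MulOpposite.op c, ?_⟩
  simpa [← MulOpposite.unop_eq_zero_iff] using hc

include O in
theorem exists_generator_twoSidedIdeal (T : TwoSidedIdeal R) :
    ∃ p, ∀ x, x ∈ T ↔ ∃ c, p * c = x := by
  have := O.isPrincipalIdealRing_mulOpposite
  obtain ⟨p, hp⟩ := (IsPrincipalIdealRing.principal T.asIdealOpposite).principal
  refine ⟨p.unop, fun x => ?_⟩
  rw [← MulOpposite.unop_op x, ← TwoSidedIdeal.mem_asIdealOpposite, hp,
    Submodule.mem_span_singleton, MulOpposite.op_surjective.exists]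
  exact exists_congr fun c => by
    rw [smul_eq_mul, ← MulOpposite.unop_inj, MulOpposite.unop_mul, MulOpposite.unop_op,
      MulOpposite.unop_op]

theorem irreducibleOre_iff_isMaximal {f : R} (hf : f ≠ 0) :
    O.IrreducibleOre f ↔ (Ideal.span {f}).IsMaximal := by
  have := O.noZeroDivisors
  rw [Ideal.isMaximal_iff, O.one_mem_span_singleton_iff hf]
  constructor
  · rintro ⟨hdeg, hfac⟩
    refine ⟨hdeg.ne', fun J u hfJ hu huJ => ?_⟩
    have := O.isPrincipalIdealRing
    obtain ⟨h, rfl⟩ := (IsPrincipalIdealRing.principal J).principal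
    obtain ⟨c, hc⟩ := Ideal.mem_span_singleton'.1 (hfJ (Ideal.mem_span_singleton_self f))
    rcases hfac c h hc.symm with ⟨d, rfl⟩ | ⟨d, rfl⟩
    · have hd : d ≠ 0 := by rintro rfl; exact hf (by rw [← hc, map_zero, zero_mul])
      refine absurd ?_ hu
      rwa [← hc, Ideal.span_singleton_mul_left_unit (hd.isUnit.map O.C)]
    · have hd : O.C d ≠ 0 := by rintro h; exact hf (by rw [← hc, h, mul_zero])
      exact (O.one_mem_span_singleton_iff hd).2 (O.ndeg_eq_zero_iff.2 ⟨d, rfl⟩)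
  · rintro ⟨hdeg, hmax⟩
    refine ⟨Nat.pos_of_ne_zero hdeg, fun g h hgh => ?_⟩
    obtain ⟨hg, hh⟩ : g ≠ 0 ∧ h ≠ 0 := by simpa [hgh] using hf
    by_cases hhf : h ∈ Ideal.span {f}
    · obtain ⟨c, hc⟩ := Ideal.mem_span_singleton'.1 hhf
      have hcg : c * g = 1 := mul_right_cancel₀ hh (by rw [mul_assoc, ← hgh, hc, one_mul])
      exact Or.inl (O.ndeg_eq_zero_iff.1 ((O.one_mem_span_singleton_iff hg).1
        (Ideal.mem_span_singleton'.2 ⟨c, hcg⟩)))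
    · have hfh : Ideal.span {f} ≤ Ideal.span {h} :=
        (Ideal.span_singleton_le_iff_mem _).2 (Ideal.mem_span_singleton'.2 ⟨g, hgh.symm⟩)
      exact Or.inr (O.ndeg_eq_zero_iff.1 ((O.one_mem_span_singleton_iff hh).1
        (hmax _ h hfh hhf (Ideal.mem_span_singleton_self h))))

include O in
/-- If the preimage of `I` is `pR`, then `g = pq = qp` because `g` is central; `φ q` kills `I`,
so `q ∈ Rg = Rqp`, and comparing degrees makes `p` a unit. -/
theorem one_mem_of_forall_mul_eq_zero {A : Type*} [Ring A] {φ : R →+* A}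
    (hφ : Function.Surjective φ) {g : R} (hg : g ∈ Subring.center R) (hg0 : g ≠ 0)
    (hker : ∀ x, φ x = 0 ↔ x ∈ Ideal.span {g}) (I : TwoSidedIdeal A)
    (hI : ∀ a, (∀ x ∈ I, a * x = 0) → a = 0) : (1 : A) ∈ I := by
  have := O.noZeroDivisors
  have hcomm : ∀ x, x * g = g * x := Subring.mem_center_iff.1 hg
  obtain ⟨p, hp⟩ := O.exists_generator_twoSidedIdeal (I.comap φ)
  obtain ⟨q, hpq⟩ := (hp g).1 (by
    rw [TwoSidedIdeal.mem_comap, (hker g).2 (Ideal.mem_span_singleton_self g)]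
    exact I.zero_mem)
  have hp0 : p ≠ 0 := by rintro rfl; exact hg0 (by rw [← hpq, zero_mul])
  have hqp : q * p = g := mul_left_cancel₀ hp0 (by rw [← mul_assoc, hpq, hcomm])
  have hφq : φ q = 0 := hI _ fun x hx => by
    obtain ⟨y, rfl⟩ := hφ x
    obtain ⟨c, rfl⟩ := (hp y).1 ((TwoSidedIdeal.mem_comap φ).2 hx)
    rw [← map_mul, ← mul_assoc, hqp, ← hcomm, hker]
    exact Ideal.mul_mem_left _ c (Ideal.mem_span_singleton_self g)
  obtain ⟨c, hc⟩ := Ideal.mem_span_singleton'.1 ((hker q).1 hφq)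
  have hq0 : q ≠ 0 := by rintro rfl; exact hg0 (by rw [← hqp, zero_mul])
  have hc0 : c ≠ 0 := by rintro rfl; exact hq0 (by rw [← hc, zero_mul])
  have hdeg := congrArg O.ndeg hc
  rw [← hqp, ← mul_assoc, O.ndeg_mul (mul_ne_zero hc0 hq0) hp0, O.ndeg_mul hc0 hq0] at hdeg
  obtain ⟨d, rfl⟩ := O.ndeg_eq_zero_iff.1 (by omega : O.ndeg p = 0)
  have hd : d ≠ 0 := by rintro rfl; exact hp0 (map_zero _)
  simpa [TwoSidedIdeal.mem_comap] using
    (hp 1).2 ⟨O.C d⁻¹, by rw [← map_mul, mul_inv_cancel₀ hd, map_one]⟩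

end OreExt

/-- The corner ring `pAp` is a division ring whose identity is `p`. -/
def IsDivisionCorner {A : Type*} [Ring A] (p : A) : Prop :=
  p ≠ 0 ∧ ∀ z : A, z = p * z * p → z ≠ 0 → ∃ w : A, w = p * w * p ∧ z * w = p ∧ w * z = p

section Corner

variable {A : Type*} [Ring A] {p : A}

theorem IsIdempotentElem.eq_mul_mul_iff (hp : IsIdempotentElem p) {z : A} :
    z = p * z * p ↔ p * z = z ∧ z * p = z := by
  refine ⟨fun hz => ⟨?_, ?_⟩, fun ⟨hl, hr⟩ => by rw [hl, hr]⟩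
  · rw [hz, ← mul_assoc, ← mul_assoc, hp.eq]
  · rw [hz, mul_assoc, hp.eq]

theorem isDivisionCorner_of_exists_mul_eq (hp : IsIdempotentElem p) (hp0 : p ≠ 0)
    (h : ∀ z, z = p * z * p → z ≠ 0 → ∃ w, w = p * w * p ∧ w * z = p) :
    IsDivisionCorner p := by
  refine ⟨hp0, fun z hz hz0 => ?_⟩
  obtain ⟨w, hw, hwz⟩ := h z hz hz0
  obtain ⟨w', hw', hw'w⟩ := h w hw (by rintro rfl; exact hp0 (by rw [← hwz, zero_mul]))
  have hw'z : w' = z := calc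
    w' = w' * (w * z) := by rw [hwz, (hp.eq_mul_mul_iff.1 hw').2]
    _ = z := by rw [← mul_assoc, hw'w, (hp.eq_mul_mul_iff.1 hz).1]
  exact ⟨w, hw, hw'z ▸ hw'w, hwz⟩

theorem eq_zero_of_forall_mul_mul_eq_zero (hfull : (1 : A) ∈ TwoSidedIdeal.span {p}) {n : A}
    (h : ∀ y, p * y * n = 0) : n = 0 := by
  suffices ∀ x ∈ TwoSidedIdeal.span {p}, ∀ y, x * y * n = 0 by simpa using this 1 hfull 1
  intro x hx
  induction hx using TwoSidedIdeal.span_induction with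
  | mem x hx => rw [Set.mem_singleton_iff.1 hx]; exact h
  | zero => simp
  | add x x' _ _ hx hx' => intro y; rw [add_mul, add_mul, hx, hx', add_zero]
  | neg x _ hx => intro y; rw [neg_mul, neg_mul, hx, neg_zero]
  | left_absorb a x _ hx => intro y; rw [mul_assoc a x y, mul_assoc a, hx, mul_zero]
  | right_absorb b x _ hx => intro y; rw [mul_assoc x b y, hx]

theorem exists_mul_eq_of_isDivisionCorner (hp : IsIdempotentElem p)
    (hfull : (1 : A) ∈ TwoSidedIdeal.span {p}) (hdiv : IsDivisionCorner p) {n : A}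
    (hn : n * p = n) (hn0 : n ≠ 0) : ∃ a, a * n = p := by
  obtain ⟨y, hy⟩ : ∃ y, p * y * n ≠ 0 := by
    by_contra! h
    exact hn0 (eq_zero_of_forall_mul_mul_eq_zero hfull h)
  obtain ⟨w, -, -, hw⟩ := hdiv.2 (p * y * n)
    (hp.eq_mul_mul_iff.2 ⟨by rw [← mul_assoc, ← mul_assoc, hp.eq], by rw [mul_assoc _ n, hn]⟩)
    hy
  exact ⟨w * p * y, by simpa only [mul_assoc] using hw⟩

end Corner

theorem IsBound.mem_of_forall_mul_mem {R : Type*} [Ring R] {f b u : R} (hb : IsBound f b)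
    (hu : ∀ r, u * r ∈ Ideal.span {f}) : u ∈ Ideal.span {b} := by
  refine hb.2.2 (TwoSidedIdeal.span {u}).asIdeal (fun x hx r => ?_) (fun x hx => ?_)
    (TwoSidedIdeal.mem_asIdeal.2 (TwoSidedIdeal.subset_span rfl))
  · exact TwoSidedIdeal.mem_asIdeal.2
      (TwoSidedIdeal.mul_mem_right _ _ _ (TwoSidedIdeal.mem_asIdeal.1 hx))
  · suffices ∀ r, x * r ∈ Ideal.span {f} by simpa using this 1
    replace hx := TwoSidedIdeal.mem_asIdeal.1 hx
    induction hx using TwoSidedIdeal.span_induction with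
    | mem x hx => rw [Set.mem_singleton_iff.1 hx]; exact hu
    | zero => simp
    | add x x' _ _ hx hx' => intro r; rw [add_mul]; exact Ideal.add_mem _ (hx r) (hx' r)
    | neg x _ hx => intro r; rw [neg_mul]; exact neg_mem (hx r)
    | left_absorb a x _ hx => intro r; rw [mul_assoc]; exact Ideal.mul_mem_left _ a (hx r)
    | right_absorb c x _ hx => intro r; rw [mul_assoc]; exact hx (c * r)

section Quotient

variable {R A : Type*} [Ring R] [Ring A] {φ : R →+* A} {f b : R} {e : A}

theorem map_mul_one_sub_eq_zero_iff (hφ : Function.Surjective φ)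
    (hker : ∀ x, φ x = 0 → x ∈ Ideal.span {b}) (hbf : Ideal.span {b} ≤ Ideal.span {f})
    (he : IsIdempotentElem e) (hAe : Ideal.span {e} = Ideal.span {φ f}) (x : R) :
    φ x * (1 - e) = 0 ↔ x ∈ Ideal.span {f} := by
  obtain ⟨a, ha⟩ := Ideal.mem_span_singleton'.1 (hAe ▸ Ideal.mem_span_singleton_self (φ f))
  obtain ⟨s, hs⟩ := Ideal.mem_span_singleton'.1 (hAe ▸ Ideal.mem_span_singleton_self e)
  obtain ⟨s, rfl⟩ := hφ s
  constructor
  · intro hx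
    have hker' : φ (x - x * s * f) = 0 := by simpa [mul_assoc, hs, mul_sub] using hx
    obtain ⟨c, hc⟩ := Ideal.mem_span_singleton'.1 (hbf (hker _ hker'))
    exact Ideal.mem_span_singleton'.2 ⟨c + x * s, by rw [add_mul, hc, sub_add_cancel]⟩
  · intro hx
    obtain ⟨c, rfl⟩ := Ideal.mem_span_singleton'.1 hx
    rw [map_mul, ← ha, mul_assoc, mul_assoc, he.mul_one_sub_self, mul_zero, mul_zero]

theorem IsBound.eq_zero_of_forall_mul_mul_one_sub_eq_zero (hb : IsBound f b)
    (hφ : Function.Surjective φ) (hker : ∀ x, φ x = 0 ↔ x ∈ Ideal.span {b})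
    (he : IsIdempotentElem e) (hAe : Ideal.span {e} = Ideal.span {φ f}) {a : A}
    (ha : ∀ y, a * y * (1 - e) = 0) : a = 0 := by
  obtain ⟨u, rfl⟩ := hφ a
  refine (hker u).2 (hb.mem_of_forall_mul_mem fun r => ?_)
  rw [← map_mul_one_sub_eq_zero_iff hφ (fun x => (hker x).1) hb.1 he hAe, map_mul]
  exact ha (φ r)

theorem isDivisionCorner_of_isMaximal (hφ : Function.Surjective φ)
    (hker : ∀ x, φ x = 0 → x ∈ Ideal.span {b}) (hbf : Ideal.span {b} ≤ Ideal.span {f})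
    (he : IsIdempotentElem e) (hAe : Ideal.span {e} = Ideal.span {φ f})
    (hmax : (Ideal.span {f}).IsMaximal) : IsDivisionCorner (1 - e) := by
  have key := map_mul_one_sub_eq_zero_iff hφ hker hbf he hAe
  have h1e : (1 : A) - e ≠ 0 := fun h =>
    hmax.ne_top ((Ideal.eq_top_iff_one _).2 ((key 1).1 (by rw [h, mul_zero])))
  refine isDivisionCorner_of_exists_mul_eq he.one_sub h1e fun z hz hz0 => ?_
  obtain ⟨u, rfl⟩ := hφ z
  obtain ⟨hzl, hzr⟩ := he.one_sub.eq_mul_mul_iff.1 hz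
  obtain ⟨r, i, hi, hri⟩ := hmax.exists_inv fun hu => hz0 (by rw [← hzr]; exact (key u).2 hu)
  refine ⟨(1 - e) * φ r * (1 - e), he.one_sub.eq_mul_mul_iff.2 ⟨by
    rw [← mul_assoc, ← mul_assoc, he.one_sub.eq], by rw [mul_assoc _ (1 - e), he.one_sub.eq]⟩, ?_⟩
  calc (1 - e) * φ r * (1 - e) * φ u = (1 - e) * φ r * φ u := by rw [mul_assoc _ (1 - e), hzl]
    _ = (1 - e) * (φ (r * u) * (1 - e)) := by rw [map_mul, mul_assoc (φ r), hzr, mul_assoc]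
    _ = (1 - e) * (1 - e) := by
      rw [eq_sub_of_add_eq hri, map_sub, map_one, sub_mul 1 (φ i), one_mul, (key i).2 hi,
        sub_zero]
    _ = 1 - e := he.one_sub.eq

theorem isMaximal_of_isDivisionCorner (hφ : Function.Surjective φ)
    (hker : ∀ x, φ x = 0 → x ∈ Ideal.span {b}) (hbf : Ideal.span {b} ≤ Ideal.span {f})
    (he : IsIdempotentElem e) (hAe : Ideal.span {e} = Ideal.span {φ f})
    (hfull : (1 : A) ∈ TwoSidedIdeal.span {1 - e}) (hdiv : IsDivisionCorner (1 - e)) :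
    (Ideal.span {f}).IsMaximal := by
  have key := map_mul_one_sub_eq_zero_iff hφ hker hbf he hAe
  rw [Ideal.isMaximal_iff]
  refine ⟨fun h1 => hdiv.1 (by simpa using (key 1).2 h1), fun J h hfJ hh hhJ => ?_⟩
  obtain ⟨a, ha⟩ := exists_mul_eq_of_isDivisionCorner he.one_sub hfull hdiv
    (n := φ h * (1 - e)) (by rw [mul_assoc, he.one_sub.eq]) fun h0 => hh ((key h).1 h0)
  obtain ⟨r, rfl⟩ := hφ a
  have hrh : r * h - 1 ∈ J := hfJ ((key _).1 (by
    rw [map_sub, map_mul, map_one, sub_mul, one_mul, mul_assoc, ha, sub_self]))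
  simpa using J.sub_mem (J.mul_mem_left r hhJ) hrh

theorem ne_zero_of_one_sub_ne_zero [NoZeroDivisors R] (hφ : Function.Surjective φ)
    (hker : ∀ x, φ x = 0 → x ∈ Ideal.span {b}) (he : IsIdempotentElem e)
    (hAe : Ideal.span {e} = Ideal.span {φ f}) (hf : f ≠ 0) (h1e : (1 : A) - e ≠ 0) : b ≠ 0 := by
  rintro rfl
  have hinj : Function.Injective φ :=
    (injective_iff_map_eq_zero φ).2 fun x hx => by simpa using hker x hx
  obtain ⟨t, rfl⟩ := hφ e
  have ht : IsIdempotentElem t := hinj (by rw [map_mul]; exact he)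
  rcases IsIdempotentElem.iff_eq_zero_or_one.1 ht with rfl | rfl
  · have hf' : φ f ∈ Ideal.span {φ 0} := hAe ▸ Ideal.mem_span_singleton_self (φ f)
    exact hf ((injective_iff_map_eq_zero φ).1 hinj f (by simpa using hf'))
  · exact h1e (by rw [map_one, sub_self])

end Quotient

theorem irreducible_iff_corner_division_general {D R A : Type*} [DivisionRing D] [Ring R]
    [Ring A] (σ : D ≃+* D) (δ : D → D) (O : OreExt D σ δ R)
    (f : R) (hf : f ≠ 0)
    (ν : D) (ghat : R) (hghatC : ghat ∈ Subring.center R)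
    (b : R) (hb : IsBound f b) (hbfact : b = O.C ν * ghat)
    (φ : R →+* A) (hφ : Function.Surjective φ)
    (hker : ∀ x : R, φ x = 0 ↔ x ∈ Ideal.span {b})
    (e : A) (he : IsIdempotentElem e)
    (hAe : (Ideal.span {e} : Ideal A) = Ideal.span {φ f}) :
    O.IrreducibleOre f ↔
      ((1 : A) - e ≠ 0 ∧
        ∀ z : A, z = (1 - e) * z * (1 - e) → z ≠ 0 →
          ∃ w : A, w = (1 - e) * w * (1 - e) ∧ z * w = 1 - e ∧ w * z = 1 - e) := by
  have hker' : ∀ x, φ x = 0 → x ∈ Ideal.span {b} := fun x => (hker x).1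
  rw [O.irreducibleOre_iff_isMaximal hf]
  refine ⟨isDivisionCorner_of_isMaximal hφ hker' hb.1 he hAe, fun hdiv => ?_⟩
  have := O.noZeroDivisors
  have := O.nontrivial
  have hb0 := ne_zero_of_one_sub_ne_zero hφ hker' he hAe hf hdiv.1
  obtain ⟨hν, hghat0⟩ : ν ≠ 0 ∧ ghat ≠ 0 := by simpa [hbfact] using hb0
  have hkerghat : ∀ x, φ x = 0 ↔ x ∈ Ideal.span {ghat} := by
    simpa [hbfact, Ideal.span_singleton_mul_left_unit (hν.isUnit.map O.C)] using hker
  have hfaithful : ∀ a, (∀ x ∈ TwoSidedIdeal.span {1 - e}, a * x = 0) → a = 0 := fun a ha =>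
    hb.eq_zero_of_forall_mul_mul_one_sub_eq_zero hφ hker he hAe fun y => by
      rw [mul_assoc]
      exact ha _ (TwoSidedIdeal.mul_mem_left _ y _ (TwoSidedIdeal.subset_span rfl))
  have hfull := O.one_mem_of_forall_mul_eq_zero hφ hghatC hghat0 hkerghat _ hfaithful
  exact isMaximal_of_isDivisionCorner hφ hker' hb.1 he hAe hfull hdiv

/-- let `R = D[X;σ,δ]` have center `C = K[z]` (`K` a field), `R` free of
finite rank over `C`; let `f` have bound `f* = ν·ĝ` with `ν ∈ D` and `ĝ` central
irreducible; let `A = R/Rf*` (encoded by a surjection `φ` with kernel `Rf*`), and let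
`e ∈ A` be an idempotent with `Ae = A·(f + Rf*)`. Then `f` is irreducible iff the
corner algebra `(1-e)A(1-e)` is a division ring. -/
theorem irreducible_iff_corner_division {D R A K : Type*} [DivisionRing D] [Ring R]
    [Ring A] [Field K] (σ : D ≃+* D) (δ : D → D) (O : OreExt D σ δ R)
    (φK : Polynomial K ≃+* Subring.center R)
    (r : ℕ) (bas : Module.Basis (Fin r) (Subring.center R) R)
    (f : R) (hf : f ≠ 0)
    (ν : D) (ghat : R) (hghatC : ghat ∈ Subring.center R)
    (hirr : Irreducible (⟨ghat, hghatC⟩ : Subring.center R))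
    (b : R) (hb : IsBound f b) (hbfact : b = O.C ν * ghat)
    (φ : R →+* A) (hφ : Function.Surjective φ)
    (hker : ∀ x : R, φ x = 0 ↔ x ∈ Ideal.span {b})
    (e : A) (he : IsIdempotentElem e)
    (hAe : (Ideal.span {e} : Ideal A) = Ideal.span {φ f}) :
    O.IrreducibleOre f ↔
      ((1 : A) - e ≠ 0 ∧
        ∀ z : A, z = (1 - e) * z * (1 - e) → z ≠ 0 →
          ∃ w : A, w = (1 - e) * w * (1 - e) ∧ z * w = 1 - e ∧ w * z = 1 - e) :=
  irreducible_iff_corner_division_general σ δ O f hf ν ghat hghatC b hb hbfact φ hφ hker e he hAe
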